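/- Let (X_j, dX_j)_{j ∈ J} be a family of saturated d-spaces. Equip the product space ∏_{j∈J} X_j (with the product topology) with the d-space structure in which a continuous path p : I → ∏ X_j is directed if and only if π_j ∘ p ∈ dX_j for every j, where π_j is the j-th projection. Then this product d-space is saturated. (Saturated d-spaces are closed under limits of d-spaces.) -/

import Mathlib

open unitInterval Topology Set

/-- Concatenation of two continuous paths `p q : C(I, X)` with `p 1 = q 0`,
traversing `p` on `[0, 1/2]` and `q` on `[1/2, 1]` (both at double speed). -/
noncomputable def concatPath {X : Type*} [TopologicalSpace X]
    (p q : C(unitInterval, X)) (h : p 1 = q 0) : C(unitInterval, X) :=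
  ((⟨p, rfl, rfl⟩ : Path (p 0) (p 1)).trans
    ((⟨q, rfl, rfl⟩ : Path (q 0) (q 1)).cast h rfl)).toContinuousMap

/-- A d-space structure on a topological space `X`: a set of continuous paths
`I → X` containing the constant paths, closed under concatenation and under
precomposition with continuous non-decreasing maps `I → I`. -/
structure DSpace (X : Type*) [TopologicalSpace X] where
  d : Set C(unitInterval, X)
  const_mem : ∀ x : X, ContinuousMap.const unitInterval x ∈ d
  concat_mem : ∀ p ∈ d, ∀ q ∈ d, ∀ h : p 1 = q 0, concatPath p q h ∈ d
  reparam_mem : ∀ p ∈ d, ∀ φ : C(unitInterval, unitInterval), Monotone ⇑φ → p.comp φ ∈ d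

/-- `c` is a directed function on the (open) set `U` for the set of directed
paths `d`: it is continuous on `U` and non-decreasing along every directed path
with image contained in `U`. -/
def IsDirectedFn {X : Type*} [TopologicalSpace X] (d : Set C(unitInterval, X))
    (U : Set X) (c : X → unitInterval) : Prop :=
  ContinuousOn c U ∧ ∀ p ∈ d, Set.range ⇑p ⊆ U → Monotone (c ∘ ⇑p)

/-- A path `p` is weakly directed when, for every directed function `c` on an
open `U`, the map `c ∘ p` is locally non-decreasing on `p ⁻¹' U`. -/
def IsWeaklyDirected {X : Type*} [TopologicalSpace X] (d : Set C(unitInterval, X))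
    (p : C(unitInterval, X)) : Prop :=
  ∀ U : Set X, IsOpen U → ∀ c : X → unitInterval, IsDirectedFn d U c →
    ∀ t : unitInterval, p t ∈ U →
      ∃ V ∈ 𝓝 t, V ⊆ ⇑p ⁻¹' U ∧ MonotoneOn (c ∘ ⇑p) V

/-- The set `d̂X` of weakly directed paths. -/
def satPaths {X : Type*} [TopologicalSpace X] (d : Set C(unitInterval, X)) :
    Set C(unitInterval, X) :=
  {p | IsWeaklyDirected d p}

/-- A set of directed paths is saturated when every weakly directed path is directed. -/
def IsSaturated {X : Type*} [TopologicalSpace X] (d : Set C(unitInterval, X)) : Prop :=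
  satPaths d = d

/-! A weakly directed path of the product projects to a weakly directed path of each factor,
because a directed function on an open set of `X j` pulls back along the projection to a
directed function of the product. Saturation of the factors then makes the projections
directed. Conversely, a directed path is weakly directed: on a closed interval `[x, y]`
inside `p ⁻¹' U`, clamping time to `[x, y]` is a monotone reparametrisation that stays in `U`. -/

lemma subset_satPaths_of_reparam {X : Type*} [TopologicalSpace X]
    (d : Set C(unitInterval, X))
    (hre : ∀ p ∈ d, ∀ φ : C(unitInterval, unitInterval), Monotone ⇑φ → p.comp φ ∈ d) :
    d ⊆ satPaths d := by
  intro p hp U hU c hc t ht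
  obtain ⟨a, b, -, hab, hsub⟩ :=
    exists_Icc_mem_subset_of_mem_nhds ((hU.preimage p.continuous).mem_nhds ht)
  refine ⟨Icc a b, hab, hsub, fun x hx y hy hxy => ?_⟩
  let φ : C(unitInterval, unitInterval) := ⟨fun s => max x (min y s), by fun_prop⟩
  have hφ_mono : Monotone φ := fun s u hsu => max_le_max le_rfl (min_le_min le_rfl hsu)
  have hφ_range : range (p.comp φ) ⊆ U := by
    rintro _ ⟨s, rfl⟩
    exact hsub ⟨hx.1.trans (le_max_left _ _),
      max_le (hxy.trans hy.2) ((min_le_left _ _).trans hy.2)⟩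
  have hφ0 : φ 0 = x := by simp [φ]
  have hφ1 : φ 1 = y := by simp [φ, min_eq_left le_one', hxy]
  simpa [hφ0, hφ1] using
    hc.2 _ (hre p hp φ hφ_mono) hφ_range (show (0 : unitInterval) ≤ 1 from nonneg')

section Pullback

variable {X Y : Type*} [TopologicalSpace X] [TopologicalSpace Y]
  {dX : Set C(unitInterval, X)} {dY : Set C(unitInterval, Y)} {f : C(X, Y)}

lemma IsDirectedFn.comp {U : Set Y} {c : Y → unitInterval} (hc : IsDirectedFn dY U c)
    (hf : ∀ q ∈ dX, f.comp q ∈ dY) : IsDirectedFn dX (f ⁻¹' U) (c ∘ f) :=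
  ⟨hc.1.comp f.continuous.continuousOn (mapsTo_preimage f U), fun q hq hqU =>
    hc.2 _ (hf q hq) (by rintro _ ⟨s, rfl⟩; exact hqU ⟨s, rfl⟩)⟩

lemma IsWeaklyDirected.comp {p : C(unitInterval, X)} (hp : IsWeaklyDirected dX p)
    (hf : ∀ q ∈ dX, f.comp q ∈ dY) : IsWeaklyDirected dY (f.comp p) :=
  fun _ hU _ hc t ht => hp _ (hU.preimage f.continuous) _ (hc.comp hf) t ht

end Pullback

/-- A product of saturated d-spaces, with directed paths those whose projections
are all directed, is saturated. -/
theorem stmt_10 {J : Type*} {X : J → Type*} [∀ j, TopologicalSpace (X j)]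
    (D : ∀ j, DSpace (X j)) (hD : ∀ j, IsSaturated (D j).d) :
    IsSaturated {p : C(unitInterval, ∀ j, X j) |
      ∀ j, (ContinuousMap.mk (fun x : ∀ i, X i => x j) (continuous_apply j)).comp p
        ∈ (D j).d} := by
  refine Subset.antisymm (fun p hp j => ?_) (subset_satPaths_of_reparam _ ?_)
  · rw [← hD j]
    exact IsWeaklyDirected.comp hp fun q hq => hq j
  · exact fun q hq φ hφ j => (D j).reparam_mem _ (hq j) φ hφ
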